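/- For any nonnegative integers m and n with n > 0, the normalized associated Legendre function P̄^m_{m+2n} has exactly n zeros in the open interval (0,1); that is, there exist exactly n real numbers 0 < x_0 < x_1 < ... < x_{n-1} < 1 with P̄^m_{m+2n}(x_j) = 0. -/

import Mathlib

open scoped Nat

/-- The Legendre polynomial of degree `l`, via Rodrigues' formula. -/
noncomputable def legendreP (l : ℕ) : ℝ → ℝ := fun x =>
  (1 / (2 ^ l * (l ! : ℝ))) * iteratedDeriv l (fun y : ℝ => (y ^ 2 - 1) ^ l) x

/-- The normalized associated Legendre function `P̄_l^m`. -/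
noncomputable def nalf (m l : ℕ) : ℝ → ℝ := fun x =>
  Real.sqrt ((2 * l + 1) / 2 * ((l - m)! : ℝ) / ((l + m)! : ℝ)) *
    (1 - x ^ 2) ^ ((m : ℝ) / 2) * iteratedDeriv m (legendreP l) x

/-- The spectral (l²-operator) norm of a real matrix. -/
noncomputable def specNorm {α β : Type*} [Fintype α] [Fintype β] [DecidableEq α] [DecidableEq β]
    (A : Matrix α β ℝ) : ℝ :=
  ‖LinearMap.toContinuousLinearMap (Matrix.toEuclideanLin A)‖

/-- The singular values of a real matrix, listed in decreasing order. -/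
noncomputable def singularValues {p q : ℕ} (A : Matrix (Fin p) (Fin q) ℝ) : List ℝ :=
  List.insertionSort (· ≥ ·)
    (List.ofFn fun i => Real.sqrt (((by simpa [Matrix.conjTranspose_eq_transpose_of_trivial] using
      Matrix.isHermitian_conjTranspose_mul_self A : (Matrix.transpose A * A).IsHermitian)).eigenvalues i))

noncomputable def ccoef (m l : ℕ) : ℝ :=
  Real.sqrt ((((l : ℝ) - m + 1) * ((l : ℝ) - m + 2) * ((l : ℝ) + m + 1) * ((l : ℝ) + m + 2)) /
    ((2 * (l : ℝ) + 1) * (2 * (l : ℝ) + 3) ^ 2 * (2 * (l : ℝ) + 5)))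

noncomputable def dcoef (m l : ℕ) : ℝ :=
  (2 * (l : ℝ) * ((l : ℝ) + 1) - 2 * (m : ℝ) ^ 2 - 1) /
    ((2 * (l : ℝ) - 1) * (2 * (l : ℝ) + 3))

/-!
On `(-1, 1)`, `P̄_l^m(x) = c(x) · q(x)` with `c(x) > 0` and `q = D^{l+m} (X² - 1)^l`, a polynomial
of degree `l - m`. Since `±1` are `l`-fold roots of `(X² - 1)^l`, repeated Rolle shows
that `D^k (X² - 1)^l` has at least `min k (2l - k)` distinct roots in `(-1, 1)`; for `k = l + m`
this is the degree, so `q` has exactly `l - m = 2n` roots, all in `(-1, 1)`. As `l + m` is even,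
`q` is even, so its roots are symmetric about `0`: having an even number of them, `0` is not one,
and exactly `n` lie in `(0, 1)`.
-/

open Polynomial Finset

namespace Polynomial

theorem iteratedDeriv_eval {𝕜 : Type*} [NontriviallyNormedField 𝕜] (p : 𝕜[X]) (k : ℕ) :
    iteratedDeriv k (fun x => p.eval x) = fun x => (derivative^[k] p).eval x := by
  induction k with
  | zero => simp
  | succ k ih =>
    ext x
    rw [iteratedDeriv_succ, ih, Function.iterate_succ_apply', Polynomial.deriv]

theorem iterate_derivative_ne_zero {R : Type*} [Semiring R] [NoZeroDivisors R] [CharZero R]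
    {p : R[X]} (hp : p ≠ 0) {k : ℕ} (hk : k ≤ p.natDegree) : derivative^[k] p ≠ 0 := by
  intro h
  have hcoeff := congrArg (coeff · (p.natDegree - k)) h
  simp only [coeff_iterate_derivative, Nat.sub_add_cancel hk, coeff_zero, coeff_natDegree,
    nsmul_eq_mul] at hcoeff
  exact mul_ne_zero (Nat.cast_ne_zero.2 (Nat.descFactorial_pos.2 hk).ne')
    (leadingCoeff_ne_zero.2 hp) hcoeff

theorem iterate_derivative_comp_neg_X {R : Type*} [CommRing R] (p : R[X]) (k : ℕ) :
    derivative^[k] (p.comp (-X)) = (-1) ^ k * (derivative^[k] p).comp (-X) := by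
  induction k with
  | zero => simp
  | succ k ih =>
    rw [Function.iterate_succ_apply', ih, Function.iterate_succ_apply', derivative_mul,
      derivative_comp]
    simp [pow_succ, derivative_pow]

theorem card_roots_Icc_le_card_roots_derivative_Ioo (p : ℝ[X]) (a b : ℝ) :
    #{x ∈ p.roots.toFinset | x ∈ Set.Icc a b} ≤
      #{x ∈ p.derivative.roots.toFinset | x ∈ Set.Ioo a b} + 1 := by
  rcases eq_or_ne (derivative p) 0 with hp' | hp'
  · rw [eq_C_of_derivative_eq_zero hp']
    simp
  have hp : p ≠ 0 := ne_of_apply_ne derivative (by rwa [derivative_zero])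
  refine card_le_of_interleaved fun x hx y hy hxy _ => ?_
  simp only [mem_filter, Multiset.mem_toFinset, mem_roots hp] at hx hy
  obtain ⟨z, hz, hz'⟩ := exists_deriv_eq_zero hxy p.continuousOn (hx.1.trans hy.1.symm)
  refine ⟨z, ?_, hz⟩
  rw [mem_filter, Multiset.mem_toFinset, mem_roots hp', IsRoot, ← p.deriv]
  exact ⟨hz', hx.2.1.trans_lt hz.1, hz.2.trans_le hy.2.2⟩

end Polynomial

theorem Finset.card_eq_two_mul_card_filter_pos_add {α : Type*} [AddCommGroup α] [LinearOrder α]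
    [IsOrderedAddMonoid α] (s : Finset α) (hs : ∀ x ∈ s, -x ∈ s) :
    #s = 2 * #{x ∈ s | 0 < x} + if (0 : α) ∈ s then 1 else 0 := by
  have hneg : {x ∈ s | x < 0} = {x ∈ s | 0 < x}.image (- ·) := by
    ext x
    simp only [mem_filter, mem_image]
    constructor
    · exact fun ⟨hx, hx0⟩ => ⟨-x, ⟨hs x hx, neg_pos.2 hx0⟩, neg_neg x⟩
    · rintro ⟨y, ⟨hy, hy0⟩, rfl⟩
      exact ⟨hs y hy, neg_neg_iff_pos.2 hy0⟩
  have hpos : {x ∈ s | ¬x < 0 ∧ 0 < x} = {x ∈ s | 0 < x} :=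
    filter_congr fun x _ => and_iff_right_of_imp fun h => h.not_gt
  have hzero : {x ∈ s | ¬x < 0 ∧ ¬0 < x} = {x ∈ s | x = 0} :=
    filter_congr fun x _ => by rw [not_lt, not_lt, le_antisymm_iff, and_comm]
  rw [← card_filter_add_card_filter_not (· < 0), hneg, card_image_of_injective _ neg_injective,
    ← card_filter_add_card_filter_not (0 < ·) (s := {x ∈ s | ¬x < 0}), filter_filter,
    filter_filter, hpos, hzero, filter_eq']
  split_ifs <;> simp only [card_singleton, card_empty] <;> ring

noncomputable def rodriguesPoly (l : ℕ) : ℝ[X] := (X ^ 2 - 1) ^ l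

theorem natDegree_rodriguesPoly (l : ℕ) : (rodriguesPoly l).natDegree = 2 * l := by
  rw [rodriguesPoly, natDegree_pow, ← C_1, natDegree_X_pow_sub_C, mul_comm]

theorem iterate_derivative_rodriguesPoly_ne_zero {l k : ℕ} (hk : k ≤ 2 * l) :
    derivative^[k] (rodriguesPoly l) ≠ 0 := by
  refine iterate_derivative_ne_zero (p := rodriguesPoly l) (pow_ne_zero _ ?_)
    (by rwa [natDegree_rodriguesPoly])
  simpa using X_pow_sub_C_ne_zero two_pos (1 : ℝ)

theorem isRoot_iterate_derivative_rodriguesPoly {l k : ℕ} (hk : k < l) {x : ℝ}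
    (hx : x ^ 2 = 1) :
    (derivative^[k] (rodriguesPoly l)).IsRoot x := by
  obtain ⟨g, hg⟩ := pow_sub_dvd_iterate_derivative_pow (X ^ 2 - 1 : ℝ[X]) l k
  simp [rodriguesPoly, IsRoot, hg, hx, Nat.sub_ne_zero_of_lt hk]

theorem eval_neg_iterate_derivative_rodriguesPoly {l k : ℕ} (hk : Even k) (x : ℝ) :
    (derivative^[k] (rodriguesPoly l)).eval (-x) = (derivative^[k] (rodriguesPoly l)).eval x := by
  have h := iterate_derivative_comp_neg_X (rodriguesPoly l) k
  rw [show (rodriguesPoly l).comp (-X) = rodriguesPoly l by simp [rodriguesPoly],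
    hk.neg_one_pow, one_mul] at h
  conv_rhs => rw [h]
  simp

theorem min_le_card_roots_Ioo_iterate_derivative_rodriguesPoly (l k : ℕ) :
    min k (2 * l - k) ≤
      #{x ∈ (derivative^[k] (rodriguesPoly l)).roots.toFinset | x ∈ Set.Ioo (-1) 1} := by
  induction k with
  | zero => simp
  | succ k ih =>
    rw [Function.iterate_succ_apply']
    set p := derivative^[k] (rodriguesPoly l)
    have hrolle := card_roots_Icc_le_card_roots_derivative_Ioo p (-1) 1
    rcases lt_or_ge k l with hkl | hlk
    · have hp : p ≠ 0 := iterate_derivative_rodriguesPoly_ne_zero (by omega)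
      have hroot {x : ℝ} (hx : x ^ 2 = 1) : x ∈ p.roots.toFinset := by
        rw [Multiset.mem_toFinset, mem_roots hp]
        exact isRoot_iterate_derivative_rodriguesPoly hkl hx
      have hsub : insert (-1) (insert 1 {x ∈ p.roots.toFinset | x ∈ Set.Ioo (-1) 1}) ⊆
          {x ∈ p.roots.toFinset | x ∈ Set.Icc (-1) 1} := by
        intro x hx
        simp only [mem_insert, mem_filter] at hx
        rcases hx with rfl | rfl | ⟨hx, hx'⟩
        · exact mem_filter.2 ⟨hroot (by norm_num), by norm_num⟩
        · exact mem_filter.2 ⟨hroot (by norm_num), by norm_num⟩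
        · exact mem_filter.2 ⟨hx, Set.Ioo_subset_Icc_self hx'⟩
      have hcard := card_le_card hsub
      rw [card_insert_of_notMem (by norm_num), card_insert_of_notMem (by simp)] at hcard
      omega
    · have hsub : {x ∈ p.roots.toFinset | x ∈ Set.Ioo (-1) 1} ⊆
          {x ∈ p.roots.toFinset | x ∈ Set.Icc (-1) 1} :=
        monotone_filter_right _ fun _ _ hx => Set.Ioo_subset_Icc_self hx
      have hcard := card_le_card hsub
      omega

theorem card_roots_toFinset_iterate_derivative_rodriguesPoly_and_mem_Ioo {l k : ℕ}
    (hlk : l ≤ k) :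
    #(derivative^[k] (rodriguesPoly l)).roots.toFinset = 2 * l - k ∧
      ∀ x ∈ (derivative^[k] (rodriguesPoly l)).roots.toFinset, x ∈ Set.Ioo (-1) 1 := by
  set q := derivative^[k] (rodriguesPoly l)
  have hlow := min_le_card_roots_Ioo_iterate_derivative_rodriguesPoly l k
  rw [min_eq_right (by omega)] at hlow
  have hup : #q.roots.toFinset ≤ 2 * l - k :=
    calc #q.roots.toFinset ≤ Multiset.card q.roots := Multiset.toFinset_card_le _
      _ ≤ q.natDegree := card_roots' q
      _ ≤ 2 * l - k := natDegree_rodriguesPoly l ▸ natDegree_iterate_derivative _ _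
  have hfilter := eq_of_subset_of_card_le (filter_subset _ _) (hup.trans hlow)
  exact ⟨le_antisymm hup (hlow.trans (card_le_card (filter_subset _ _))),
    fun x hx => (mem_filter.1 (hfilter ▸ hx)).2⟩

theorem card_roots_Ioo_zero_one_iterate_derivative_rodriguesPoly (m n : ℕ) :
    #{x ∈ (derivative^[m + 2 * n + m] (rodriguesPoly (m + 2 * n))).roots.toFinset |
      x ∈ Set.Ioo 0 1} = n := by
  obtain ⟨hcard, hIoo⟩ := card_roots_toFinset_iterate_derivative_rodriguesPoly_and_mem_Ioo
    (Nat.le_add_right (m + 2 * n) m)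
  set q := derivative^[m + 2 * n + m] (rodriguesPoly (m + 2 * n))
  have hq : q ≠ 0 := iterate_derivative_rodriguesPoly_ne_zero (by omega)
  have hsymm : ∀ x ∈ q.roots.toFinset, -x ∈ q.roots.toFinset := by
    intro x hx
    simp only [Multiset.mem_toFinset, mem_roots hq, IsRoot] at hx ⊢
    rwa [eval_neg_iterate_derivative_rodriguesPoly ⟨m + n, by omega⟩]
  have hpos : {x ∈ q.roots.toFinset | x ∈ Set.Ioo 0 1} = {x ∈ q.roots.toFinset | 0 < x} :=
    filter_congr fun x hx => and_iff_left_of_imp fun _ => (hIoo x hx).2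
  have hcount := card_eq_two_mul_card_filter_pos_add _ hsymm
  rw [hpos]
  split_ifs at hcount <;> omega

theorem iteratedDeriv_legendreP (m l : ℕ) :
    iteratedDeriv m (legendreP l) = fun x =>
      1 / (2 ^ l * (l ! : ℝ)) * (derivative^[l + m] (rodriguesPoly l)).eval x := by
  have h : legendreP l = fun x =>
      (C (1 / (2 ^ l * (l ! : ℝ))) * derivative^[l] (rodriguesPoly l)).eval x := by
    ext x
    have := congrFun (iteratedDeriv_eval (rodriguesPoly l) l) x
    simp only [rodriguesPoly, eval_pow, eval_sub, eval_X, eval_one] at this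
    simp [legendreP, rodriguesPoly, this]
  rw [h, iteratedDeriv_eval, iterate_derivative_C_mul, ← Function.iterate_add_apply, add_comm m l]
  simp

theorem nalf_eq_zero_iff {m l : ℕ} {x : ℝ} (hx : x ∈ Set.Ioo (-1) 1) :
    nalf m l x = 0 ↔ (derivative^[l + m] (rodriguesPoly l)).IsRoot x := by
  have hsqrt : 0 < Real.sqrt ((2 * l + 1) / 2 * ((l - m)! : ℝ) / ((l + m)! : ℝ)) :=
    Real.sqrt_pos.2 (by positivity)
  have hweight : 0 < (1 - x ^ 2) ^ ((m : ℝ) / 2) :=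
    Real.rpow_pos_of_pos (by nlinarith [hx.1, hx.2]) _
  have hnorm : 0 < 1 / (2 ^ l * (l ! : ℝ)) := by positivity
  simp only [nalf, iteratedDeriv_legendreP, IsRoot.def, mul_eq_zero, hsqrt.ne', hweight.ne',
    hnorm.ne', false_or]

theorem zeros_of_nalf_even_general (m n : ℕ) :
    ∃ x : Fin n → ℝ, StrictMono x ∧
      (∀ j, x j ∈ Set.Ioo (0 : ℝ) 1 ∧ nalf m (m + 2 * n) (x j) = 0) ∧
      (∀ y ∈ Set.Ioo (0 : ℝ) 1, nalf m (m + 2 * n) y = 0 → ∃ j, y = x j) := by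
  set q := derivative^[m + 2 * n + m] (rodriguesPoly (m + 2 * n))
  have hq : q ≠ 0 := iterate_derivative_rodriguesPoly_ne_zero (by omega)
  set T := {x ∈ q.roots.toFinset | x ∈ Set.Ioo 0 1}
  have hT (y : ℝ) : y ∈ T ↔ y ∈ Set.Ioo 0 1 ∧ nalf m (m + 2 * n) y = 0 := by
    rw [mem_filter, Multiset.mem_toFinset, mem_roots hq, and_comm]
    exact and_congr_right fun hy => (nalf_eq_zero_iff ⟨by linarith [hy.1], hy.2⟩).symm
  let x := T.orderEmbOfFin (card_roots_Ioo_zero_one_iterate_derivative_rodriguesPoly m n)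
  refine ⟨x, x.strictMono, fun j => (hT _).1 (T.orderEmbOfFin_mem _ j), fun y hy hy0 => ?_⟩
  obtain ⟨j, hj⟩ : y ∈ Set.range x := by
    rw [range_orderEmbOfFin]
    exact (hT y).2 ⟨hy, hy0⟩
  exact ⟨j, hj.symm⟩

theorem zeros_of_nalf_even (m n : ℕ) (hn : 0 < n) :
    ∃ x : Fin n → ℝ, StrictMono x ∧
      (∀ j, x j ∈ Set.Ioo (0 : ℝ) 1 ∧ nalf m (m + 2 * n) (x j) = 0) ∧
      (∀ y ∈ Set.Ioo (0 : ℝ) 1, nalf m (m + 2 * n) y = 0 → ∃ j, y = x j) :=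
  zeros_of_nalf_even_general m n
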